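/- Every ε-space is curvature-curvature commuting: for all tangent vectors u, v, z, w, the operators R(u,v) and R(z,w) commute. Concretely, any two n×n matrices of the form c·M(λ), where M(λ)_{i,n-1} = λ_i and M(λ)_{n,i} = λ_i for i = 1,…,n-2 and all other entries zero, commute with each other. -/
import Mathlib


noncomputable section

/-- Partial derivative of a function on `ℝⁿ` in the `a`-th coordinate direction. -/
def pd {N : ℕ} (a : Fin N) (h : (Fin N → ℝ) → ℝ) (x : Fin N → ℝ) : ℝ :=
  deriv (fun t => h (Function.update x a t)) (x a)

/-- The index of the coordinate `x_n` (dimension `n = m+3`). -/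
def lastIdx (m : ℕ) : Fin (m + 3) := ⟨m + 2, by omega⟩

/-- The index of the coordinate `x_{n-1}`. -/
def penIdx (m : ℕ) : Fin (m + 3) := ⟨m + 1, by omega⟩

/-- The ε-metric `g_ε = Σ_{i=1}^{n-2} (dx_i)² - dx_{n-1} dx_n + ε(Σ x_i²)(dx_{n-1})²`. -/
def gEps (m : ℕ) (ε : ℝ) (x : Fin (m + 3) → ℝ) (i j : Fin (m + 3)) : ℝ :=
  if i = j ∧ (i : ℕ) < m + 1 then 1
  else if i = penIdx m ∧ j = penIdx m then
    ε * ∑ k : Fin (m + 3), (if (k : ℕ) < m + 1 then (x k) ^ 2 else 0)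
  else if (i = penIdx m ∧ j = lastIdx m) ∨ (i = lastIdx m ∧ j = penIdx m) then -(1 / 2)
  else 0

/-- Christoffel symbols of the ε-metric: `∇_{∂_i}∂_{n-1} = -2εx_i ∂_n` for spatial `i`,
`∇_{∂_{n-1}}∂_{n-1} = -ε Σ_k x_k ∂_k`, all others zero. -/
def ΓEps (m : ℕ) (ε : ℝ) (x : Fin (m + 3) → ℝ) (k i j : Fin (m + 3)) : ℝ :=
  if (i : ℕ) < m + 1 ∧ j = penIdx m ∧ k = lastIdx m then -(2 * ε * x i)
  else if (j : ℕ) < m + 1 ∧ i = penIdx m ∧ k = lastIdx m then -(2 * ε * x j)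
  else if i = penIdx m ∧ j = penIdx m ∧ (k : ℕ) < m + 1 then -(ε * x k)
  else 0

/-- Component on `∂_l` of `R(∂_i,∂_j)∂_k`, convention `R(X,Y) = ∇_{[X,Y]} - [∇_X, ∇_Y]`. -/
def RopEps (m : ℕ) (ε : ℝ) (x : Fin (m + 3) → ℝ) (i j k l : Fin (m + 3)) : ℝ :=
  -(pd i (fun y => ΓEps m ε y l j k) x - pd j (fun y => ΓEps m ε y l i k) x
    + ∑ s, (ΓEps m ε x l i s * ΓEps m ε x s j k - ΓEps m ε x l j s * ΓEps m ε x s i k))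

/-- The (0,4)-curvature tensor of the ε-metric. -/
def R4Eps (m : ℕ) (ε : ℝ) (x : Fin (m + 3) → ℝ) (i j k h : Fin (m + 3)) : ℝ :=
  ∑ l, RopEps m ε x i j k l * gEps m ε x l h

/-- Ricci tensor `Ric(X,Y) = trace (Z ↦ R(X,Z)Y)` of the ε-metric. -/
def RicEps (m : ℕ) (ε : ℝ) (x : Fin (m + 3) → ℝ) (i j : Fin (m + 3)) : ℝ :=
  ∑ k, RopEps m ε x i k j k

/-- Covariant derivative `(∇_{∂_a} R)(∂_i,∂_j,∂_k,∂_h)` of the (0,4)-curvature tensor. -/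
def covR4Eps (m : ℕ) (ε : ℝ) (x : Fin (m + 3) → ℝ) (a i j k h : Fin (m + 3)) : ℝ :=
  pd a (fun y => R4Eps m ε y i j k h) x
    - ∑ s, (ΓEps m ε x s a i * R4Eps m ε x s j k h + ΓEps m ε x s a j * R4Eps m ε x i s k h
      + ΓEps m ε x s a k * R4Eps m ε x i j s h + ΓEps m ε x s a h * R4Eps m ε x i j k s)

/-- The matrix of the curvature operator `R(u,v)` in the coordinate frame. -/
def RMatEps (m : ℕ) (ε : ℝ) (x : Fin (m + 3) → ℝ) (u v : Fin (m + 3) → ℝ) :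
    Matrix (Fin (m + 3)) (Fin (m + 3)) ℝ :=
  Matrix.of fun l k => ∑ i, ∑ j, u i * v j * RopEps m ε x i j k l

/-- The inner product of tangent vectors with respect to the ε-metric. -/
def gdotEps (m : ℕ) (ε : ℝ) (x : Fin (m + 3) → ℝ) (u v : Fin (m + 3) → ℝ) : ℝ :=
  ∑ i, ∑ j, gEps m ε x i j * u i * v j

/-- The auxiliary matrix `c·M(λ)` with `M(λ)_{i,n-1} = λ_i` and `M(λ)_{n,i} = λ_i` for
spatial `i`, all other entries zero. -/
def Mmat (m : ℕ) (c : ℝ) (lam : Fin (m + 3) → ℝ) :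
    Matrix (Fin (m + 3)) (Fin (m + 3)) ℝ :=
  Matrix.of fun l k =>
    if (l : ℕ) < m + 1 ∧ k = penIdx m then c * lam l
    else if l = lastIdx m ∧ (k : ℕ) < m + 1 then c * lam k
    else 0

@[simp] lemma penIdx_val (m : ℕ) : ((penIdx m : Fin (m+3)) : ℕ) = m + 1 := rfl
@[simp] lemma lastIdx_val (m : ℕ) : ((lastIdx m : Fin (m+3)) : ℕ) = m + 2 := rfl

lemma deriv_neg_const_mul (c y : ℝ) : deriv (fun t : ℝ => -(c * t)) y = -c := by
  simpa using (((hasDerivAt_id y).const_mul c).neg).deriv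

lemma pd_gamma (m : ℕ) (ε : ℝ) (x : Fin (m+3) → ℝ) (a l j k : Fin (m+3)) :
    pd a (fun y => ΓEps m ε y l j k) x =
      if (j : ℕ) < m + 1 ∧ k = penIdx m ∧ l = lastIdx m ∧ a = j then -(2*ε)
      else if (k : ℕ) < m + 1 ∧ j = penIdx m ∧ l = lastIdx m ∧ a = k then -(2*ε)
      else if j = penIdx m ∧ k = penIdx m ∧ (l : ℕ) < m + 1 ∧ a = l then -ε
      else 0 := by
  unfold pd ΓEps
  simp only [Function.update_apply]
  split_ifs <;>
    simp only [deriv_neg_const_mul, deriv_const'] <;>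
    first
      | rfl
      | ring1
      | (exfalso; simp_all [Fin.ext_iff] <;> omega)

set_option linter.unreachableTactic false
set_option linter.unusedTactic false

lemma gamma_prod (m : ℕ) (ε : ℝ) (x : Fin (m+3) → ℝ) (i j k l s : Fin (m+3)) :
    ΓEps m ε x l i s * ΓEps m ε x s j k =
      if i = penIdx m ∧ j = penIdx m ∧ k = penIdx m ∧ l = lastIdx m ∧ (s : ℕ) < m + 1
      then (2 * ε * x s) * (ε * x s) else 0 := by
  unfold ΓEps
  split_ifs <;>
    first
      | ring1
      | (exfalso; simp_all [Fin.ext_iff] <;> omega)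

lemma gamma_quad_symm (m : ℕ) (ε : ℝ) (x : Fin (m+3) → ℝ) (i j k l s : Fin (m+3)) :
    ΓEps m ε x l i s * ΓEps m ε x s j k = ΓEps m ε x l j s * ΓEps m ε x s i k := by
  rw [gamma_prod, gamma_prod]
  split_ifs <;>
    first
      | ring1
      | (exfalso; simp_all [Fin.ext_iff] <;> omega)

lemma ite3_split {p q r : Prop} [Decidable p] [Decidable q] [Decidable r]
    (hpq : ¬(p ∧ q)) (hpr : ¬(p ∧ r)) (hqr : ¬(q ∧ r)) (a b c : ℝ) :
    (if p then a else if q then b else if r then c else 0)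
      = (if p then a else 0) + (if q then b else 0) + (if r then c else 0) := by
  split_ifs <;> first | (exfalso; tauto) | ring1

lemma ite_neg_congr {p q : Prop} [Decidable p] [Decidable q] (h : p ↔ q) (a : ℝ) :
    (if p then -a else 0) = -(if q then a else 0) := by
  split_ifs <;> first | ring1 | (exfalso; tauto)

lemma rop_eval (m : ℕ) (ε : ℝ) (x : Fin (m+3) → ℝ) (i j k l : Fin (m+3)) :
    RopEps m ε x i j k l =
      (if j = penIdx m ∧ i = k ∧ (k : ℕ) < m + 1 ∧ l = lastIdx m then 2*ε else 0)
      - (if i = penIdx m ∧ j = k ∧ (k : ℕ) < m + 1 ∧ l = lastIdx m then 2*ε else 0)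
      + (if j = penIdx m ∧ i = l ∧ (l : ℕ) < m + 1 ∧ k = penIdx m then ε else 0)
      - (if i = penIdx m ∧ j = l ∧ (l : ℕ) < m + 1 ∧ k = penIdx m then ε else 0) := by
  have hx : ∀ (a b : Fin (m+3)), a = b → ((b : ℕ)) = (a : ℕ) := by
    rintro a b rfl; rfl
  unfold RopEps
  rw [pd_gamma, pd_gamma]
  have hsum : ∀ s, ΓEps m ε x l i s * ΓEps m ε x s j k
      - ΓEps m ε x l j s * ΓEps m ε x s i k = 0 := fun s => by
    rw [gamma_quad_symm]; ring
  rw [Finset.sum_congr rfl (fun s _ => hsum s), Finset.sum_const_zero]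
  rw [ite3_split (a := -(2*ε)) (b := -(2*ε)) (c := -ε)
      (by rintro ⟨⟨-,h2,-,-⟩,⟨h2',-,-⟩⟩; rw [h2] at h2'; simp at h2')
      (by rintro ⟨⟨-,-,h3,-⟩,⟨-,-,h3',-⟩⟩; rw [h3] at h3'; simp at h3')
      (by rintro ⟨⟨-,-,h3,-⟩,⟨-,-,h3',-⟩⟩; rw [h3] at h3'; simp at h3'),
    ite3_split (a := -(2*ε)) (b := -(2*ε)) (c := -ε)
      (by rintro ⟨⟨-,h2,-,-⟩,⟨h2',-,-⟩⟩; rw [h2] at h2'; simp at h2')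
      (by rintro ⟨⟨-,-,h3,-⟩,⟨-,-,h3',-⟩⟩; rw [h3] at h3'; simp at h3')
      (by rintro ⟨⟨-,-,h3,-⟩,⟨-,-,h3',-⟩⟩; rw [h3] at h3'; simp at h3')]
  have e1 : (if (j : ℕ) < m + 1 ∧ k = penIdx m ∧ l = lastIdx m ∧ i = j then (-(2*ε) : ℝ) else 0)
      = (if (i : ℕ) < m + 1 ∧ k = penIdx m ∧ l = lastIdx m ∧ j = i then -(2*ε) else 0) := by
    apply if_congr _ rfl rfl
    constructor <;> rintro ⟨h1,h2,h3,rfl⟩ <;> exact ⟨h1,h2,h3,rfl⟩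
  have e2 : (if (k : ℕ) < m + 1 ∧ j = penIdx m ∧ l = lastIdx m ∧ i = k then (-(2*ε) : ℝ) else 0)
      = -(if j = penIdx m ∧ i = k ∧ (k : ℕ) < m + 1 ∧ l = lastIdx m then 2*ε else 0) :=
    ite_neg_congr (by tauto) _
  have e3 : (if (k : ℕ) < m + 1 ∧ i = penIdx m ∧ l = lastIdx m ∧ j = k then (-(2*ε) : ℝ) else 0)
      = -(if i = penIdx m ∧ j = k ∧ (k : ℕ) < m + 1 ∧ l = lastIdx m then 2*ε else 0) :=
    ite_neg_congr (by tauto) _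
  have e4 : (if j = penIdx m ∧ k = penIdx m ∧ (l : ℕ) < m + 1 ∧ i = l then (-ε : ℝ) else 0)
      = -(if j = penIdx m ∧ i = l ∧ (l : ℕ) < m + 1 ∧ k = penIdx m then ε else 0) :=
    ite_neg_congr (by tauto) _
  have e5 : (if i = penIdx m ∧ k = penIdx m ∧ (l : ℕ) < m + 1 ∧ j = l then (-ε : ℝ) else 0)
      = -(if i = penIdx m ∧ j = l ∧ (l : ℕ) < m + 1 ∧ k = penIdx m then ε else 0) :=
    ite_neg_congr (by tauto) _
  rw [e1, e2, e3, e4, e5]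
  ring

lemma dsum1 {N : ℕ} [NeZero N] (u v : Fin N → ℝ) (p q : Fin N) (c : Prop) [Decidable c] (a : ℝ) :
    (∑ i, ∑ j, u i * v j * (if j = p ∧ i = q ∧ c then a else 0)) = if c then u q * v p * a else 0 := by
  by_cases hc : c <;>
    simp [hc, ite_and, mul_ite, mul_zero, Finset.sum_ite_eq, Finset.sum_ite_eq'] <;> ring

lemma dsum2 {N : ℕ} [NeZero N] (u v : Fin N → ℝ) (p q : Fin N) (c : Prop) [Decidable c] (a : ℝ) :
    (∑ i, ∑ j, u i * v j * (if i = p ∧ j = q ∧ c then a else 0)) = if c then u p * v q * a else 0 := by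
  by_cases hc : c <;>
    simp [hc, ite_and, mul_ite, mul_zero, Finset.sum_ite_eq, Finset.sum_ite_eq'] <;> ring

lemma rmat_entry (m : ℕ) (ε : ℝ) (x : Fin (m+3) → ℝ) (u v : Fin (m+3) → ℝ) (l k : Fin (m+3)) :
    RMatEps m ε x u v l k =
      (if (l : ℕ) < m + 1 ∧ k = penIdx m
        then ε * (u l * v (penIdx m) - u (penIdx m) * v l) else 0)
      + (if l = lastIdx m ∧ (k : ℕ) < m + 1
        then 2*ε*(u k * v (penIdx m) - u (penIdx m) * v k) else 0) := by
  have step : ∀ i j : Fin (m+3), u i * v j * RopEps m ε x i j k l =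
      u i * v j * (if j = penIdx m ∧ i = k ∧ (k : ℕ) < m + 1 ∧ l = lastIdx m then 2*ε else 0)
      - u i * v j * (if i = penIdx m ∧ j = k ∧ (k : ℕ) < m + 1 ∧ l = lastIdx m then 2*ε else 0)
      + u i * v j * (if j = penIdx m ∧ i = l ∧ (l : ℕ) < m + 1 ∧ k = penIdx m then ε else 0)
      - u i * v j * (if i = penIdx m ∧ j = l ∧ (l : ℕ) < m + 1 ∧ k = penIdx m then ε else 0) := by
    intro i j; rw [rop_eval]; ring
  show (∑ i, ∑ j, u i * v j * RopEps m ε x i j k l) = _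
  simp only [step, Finset.sum_sub_distrib, Finset.sum_add_distrib]
  rw [dsum1 u v (penIdx m) k _ (2*ε), dsum2 u v (penIdx m) k _ (2*ε),
    dsum1 u v (penIdx m) l _ ε, dsum2 u v (penIdx m) l _ ε]
  split_ifs <;> first | ring1 | (exfalso; tauto)

lemma shape_comm {m : ℕ} (A B : Matrix (Fin (m+3)) (Fin (m+3)) ℝ)
    (a b a' b' : ℝ) (f g : Fin (m+3) → ℝ)
    (hA : ∀ l k, A l k = (if (l : ℕ) < m + 1 ∧ k = penIdx m then a * f l else 0)
      + (if l = lastIdx m ∧ (k : ℕ) < m + 1 then b * f k else 0))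
    (hB : ∀ l k, B l k = (if (l : ℕ) < m + 1 ∧ k = penIdx m then a' * g l else 0)
      + (if l = lastIdx m ∧ (k : ℕ) < m + 1 then b' * g k else 0))
    (h : b * a' = b' * a) : A * B = B * A := by
  ext l k
  rw [Matrix.mul_apply, Matrix.mul_apply]
  refine Finset.sum_congr rfl fun s _ => ?_
  rw [hA l s, hB s k, hB l s, hA s k]
  split_ifs <;>
    first
      | ring1
      | linear_combination f s * g s * h
      | (exfalso; simp_all [Fin.ext_iff] <;> omega)

lemma mmat_entry (m : ℕ) (c : ℝ) (lam : Fin (m+3) → ℝ) (l k : Fin (m+3)) :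
    Mmat m c lam l k =
      (if (l : ℕ) < m + 1 ∧ k = penIdx m then c * lam l else 0)
      + (if l = lastIdx m ∧ (k : ℕ) < m + 1 then c * lam k else 0) := by
  show (if (l : ℕ) < m + 1 ∧ k = penIdx m then c * lam l
    else if l = lastIdx m ∧ (k : ℕ) < m + 1 then c * lam k else 0) = _
  split_ifs <;>
    first
      | ring1
      | (exfalso; simp_all [Fin.ext_iff] <;> omega)


/-- every ε-space is curvature-curvature commuting:
`R(u,v)·R(z,w) = R(z,w)·R(u,v)` for all tangent vectors; concretely, any two matrices
of the form `c·M(λ)` commute. -/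
theorem eps_curvature_curvature_commuting (m : ℕ) (ε : ℝ) (hε : ε = 1 ∨ ε = -1) :
    (∀ (x : Fin (m + 3) → ℝ) (u v z w : Fin (m + 3) → ℝ),
      RMatEps m ε x u v * RMatEps m ε x z w = RMatEps m ε x z w * RMatEps m ε x u v) ∧
    (∀ (c c' : ℝ) (lam lam' : Fin (m + 3) → ℝ),
      Mmat m c lam * Mmat m c' lam' = Mmat m c' lam' * Mmat m c lam) := by
  constructor
  · intro x u v z w
    exact shape_comm _ _ ε (2*ε) ε (2*ε)
      (fun i => u i * v (penIdx m) - u (penIdx m) * v i)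
      (fun i => z i * w (penIdx m) - z (penIdx m) * w i)
      (fun l k => rmat_entry m ε x u v l k)
      (fun l k => rmat_entry m ε x z w l k) (by ring)
  · intro c c' lam lam'
    exact shape_comm _ _ c c c' c' lam lam'
      (fun l k => mmat_entry m c lam l k)
      (fun l k => mmat_entry m c' lam' l k) (by ring)
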